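/- Over ℝ², for the basis tensor f_{H,0} = (⊗^k dx²) ⊗ ((⊗^{ℓ-H} dx¹) ⊗_s (⊗^H dx²)) with 0 ≤ H ≤ min{k,ℓ}, there exists a (k-1,ℓ-1)-tensor w with A(Sym(A f_{H,0})) = (-1)^ℓ f_{H,0} + λw. -/

import Mathlib

open scoped BigOperators
open MeasureTheory

namespace MRT

/-- A multi-index with `n` slots, each ranging over the two coordinate indices of `ℝ²`
(`0` stands for the index "1", `1` stands for the index "2"). -/
abbrev Idx (n : ℕ) := Fin n → Fin 2

/-- A `(k,ℓ)`-tensor over `ℝ²`: a function of `k` first-group and `ℓ` second-group indices. -/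
abbrev Tens (k l : ℕ) := Idx k → Idx l → ℝ

/-- A tensor with `n` (fully interchangeable) slots. -/
abbrev Full (n : ℕ) := Idx n → ℝ

/-- The index swap `δ` exchanging the two coordinate indices. -/
def dswap : Fin 2 → Fin 2 := fun i => 1 - i

/-- `N J` : the number of entries of `J` equal to the first index ("1"). -/
def NJ {n : ℕ} (J : Idx n) : ℕ := (Finset.univ.filter fun j => J j = 0).card

/-- The operator `A`: `(Af)(I,J) = (-1)^(ℓ - N(J)) f(I, δ(J))`. -/
def opA {k l : ℕ} (f : Tens k l) : Tens k l :=
  fun I J => (-1 : ℝ) ^ (l - NJ J) * f I (dswap ∘ J)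

/-- Full symmetrization (average over all permutations of the `n` slots). -/
noncomputable def Sym {n : ℕ} (h : Full n) : Full n :=
  fun I => ((Nat.factorial n : ℝ))⁻¹ * ∑ σ : Equiv.Perm (Fin n), h (I ∘ σ)

/-- Symmetrization over the first index group only. -/
noncomputable def symK {k l : ℕ} (f : Tens k l) : Tens k l :=
  fun I J => ((Nat.factorial k : ℝ))⁻¹ * ∑ σ : Equiv.Perm (Fin k), f (I ∘ σ) J

/-- Symmetrization over the second index group only. -/
noncomputable def symL {k l : ℕ} (f : Tens k l) : Tens k l :=
  fun I J => ((Nat.factorial l : ℝ))⁻¹ * ∑ σ : Equiv.Perm (Fin l), f I (J ∘ σ)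

/-- View a `(k,ℓ)`-tensor as a `(k+ℓ)`-tensor. -/
def toFull {k l : ℕ} (f : Tens k l) : Full (k + l) :=
  fun I => f (fun i => I (Fin.castAdd l i)) (fun j => I (Fin.natAdd k j))

/-- View a `(k+ℓ)`-tensor as a `(k,ℓ)`-tensor. -/
def fromFull {k l : ℕ} (h : Full (k + l)) : Tens k l :=
  fun I J => h (Fin.append I J)

/-- The operator `λ` : symmetrized multiplication with the Euclidean metric `g = δ`. -/
noncomputable def lam {k l : ℕ} (w : Tens k l) : Tens (k + 1) (l + 1) :=
  symK (symL (fun I J =>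
    (if I 0 = J 0 then (1 : ℝ) else 0) * w (Fin.tail I) (Fin.tail J)))

/-- The contraction `v^I = v_{i₁} ⋯ v_{i_n}`. -/
def vpow {n : ℕ} (v : Fin 2 → ℝ) (I : Idx n) : ℝ := ∏ i, v (I i)

/-- The rotation `σ(v) = (v₂, -v₁)`. -/
def rot (v : Fin 2 → ℝ) : Fin 2 → ℝ := ![v 1, -v 0]

/-- Euclidean dot product on `ℝ²`. -/
def dot (x v : Fin 2 → ℝ) : ℝ := x 0 * v 0 + x 1 * v 1

/-- Symmetry in the first `k` and in the last `ℓ` index slots. -/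
def SymmIn {k l : ℕ} (f : Tens k l) : Prop :=
  ∀ (I : Idx k) (J : Idx l) (σ : Equiv.Perm (Fin k)) (τ : Equiv.Perm (Fin l)),
    f (I ∘ σ) (J ∘ τ) = f I J

/-- Smoothness of a tensor field on `ℝ²`, componentwise. -/
def SmoothT {k l : ℕ} (u : (Fin 2 → ℝ) → Tens k l) : Prop :=
  ∀ I J, ContDiff ℝ (⊤ : ℕ∞) fun x => u x I J

/-- The operator `d'` for the flat connection: symmetrized partial derivative placed in the
first index group. -/
noncomputable def dprime {k l : ℕ} (u : (Fin 2 → ℝ) → Tens k l) :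
    (Fin 2 → ℝ) → Tens (k + 1) l :=
  fun x => symK fun I J =>
    fderiv ℝ (fun y => u y (Fin.tail I) J) x (Pi.single (I 0) 1)

/-- The full (flat) covariant derivative of a field of `n`-tensors, derivative slot first. -/
noncomputable def dfull {n : ℕ} (h : (Fin 2 → ℝ) → Full n) :
    (Fin 2 → ℝ) → Full (n + 1) :=
  fun x I => fderiv ℝ (fun y => h y (Fin.tail I)) x (Pi.single (I 0) 1)

/-- The inner derivative `dˢ`: full symmetrization of the derivative, viewed as a
`(k+1,ℓ)`-tensor field. -/
noncomputable def dsym {k l : ℕ} (u : (Fin 2 → ℝ) → Tens k l) :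
    (Fin 2 → ℝ) → Tens (k + 1) l :=
  fun x I J =>
    Sym (dfull (fun y => toFull (u y)) x) (Fin.cons (I 0) (Fin.append (Fin.tail I) J))

/-- The symmetric tensor `(⊗^m dx¹) ⊗_s (⊗^(n-m) dx²)` (averaged symmetrization of the
elementary tensor product with `m` copies of `dx¹` followed by copies of `dx²`). -/
noncomputable def E (n m : ℕ) : Full n :=
  Sym fun I => if ∀ i : Fin n, (I i = 0 ↔ (i : ℕ) < m) then 1 else 0

/-- Membership in the closed unit disc. -/
def inDisc (x : Fin 2 → ℝ) : Prop := x 0 ^ 2 + x 1 ^ 2 ≤ 1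

/-- Membership in the unit circle (the boundary of the disc). -/
def onSphere (x : Fin 2 → ℝ) : Prop := x 0 ^ 2 + x 1 ^ 2 = 1

/-- Unit vectors of `ℝ²`. -/
def unitVec (v : Fin 2 → ℝ) : Prop := v 0 ^ 2 + v 1 ^ 2 = 1

/-- Exit time of the chord `t ↦ x + t v` of the unit disc, `x ∈ ∂D`, `‖v‖ = 1`. -/
noncomputable def tauD (x v : Fin 2 → ℝ) : ℝ := -2 * dot x v

/-- The mixed ray transform `L_{k,ℓ}` on the Euclidean unit disc. -/
noncomputable def Lray {k l : ℕ} (f : (Fin 2 → ℝ) → Tens k l) (x v : Fin 2 → ℝ) : ℝ :=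
  ∫ t in (0:ℝ)..tauD x v,
    ∑ I : Idx k, ∑ J : Idx l, f (x + t • v) I J * vpow v I * vpow (rot v) J

/-- The geodesic (X-ray) transform of a field of symmetric `n`-tensors on the unit disc. -/
noncomputable def Iray {n : ℕ} (h : (Fin 2 → ℝ) → Full n) (x v : Fin 2 → ℝ) : ℝ :=
  ∫ t in (0:ℝ)..tauD x v, ∑ I : Idx n, h (x + t • v) I * vpow v I

section Aux
open Finset

lemma fin2_eq_zero_or_one (x : Fin 2) : x = 0 ∨ x = 1 := by
  fin_cases x <;> simp

lemma NJ_le {n : ℕ} (J : Idx n) : NJ J ≤ n := by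
  classical
  simpa [NJ] using (Finset.card_filter_le Finset.univ fun j => J j = 0)

lemma NJ_sum {n : ℕ} (J : Idx n) : NJ J = ∑ i : Fin n, if J i = 0 then 1 else 0 := by
  classical
  simpa [NJ] using Finset.card_filter (fun i => J i = 0) (Finset.univ : Finset (Fin n))

lemma NJ_comp_perm {n : ℕ} (J : Idx n) (σ : Equiv.Perm (Fin n)) : NJ (J ∘ σ) = NJ J := by
  classical
  rw [NJ_sum, NJ_sum]
  exact Equiv.sum_comp σ (fun i => if J i = 0 then 1 else 0)

lemma NJ_dswap {n : ℕ} (J : Idx n) : NJ (dswap ∘ J) = n - NJ J := by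
  classical
  have h1 : ∀ x : Fin 2, dswap x = 0 ↔ ¬ x = 0 := by decide
  have : NJ (dswap ∘ J) = (Finset.univ.filter fun j => ¬ J j = 0).card := by
    simp only [NJ, Function.comp, h1]
  rw [this]
  have h2 := Finset.card_filter_add_card_filter_not
    (s := (Finset.univ : Finset (Fin n))) (p := fun j => J j = 0)
  simp only [Finset.card_univ, Fintype.card_fin] at h2
  have h3 : NJ J = (Finset.univ.filter fun j => J j = 0).card := rfl
  omega

lemma NJ_append {k l : ℕ} (I : Idx k) (J : Idx l) :
    NJ (Fin.append I J) = NJ I + NJ J := by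
  classical
  rw [NJ_sum, NJ_sum, NJ_sum, Fin.sum_univ_add]
  simp [Fin.append_left, Fin.append_right]

lemma NJ_parts {k l : ℕ} (M : Idx (k + l)) :
    NJ M = NJ (fun i => M (Fin.castAdd l i)) + NJ (fun j => M (Fin.natAdd k j)) := by
  classical
  rw [NJ_sum, NJ_sum, NJ_sum, Fin.sum_univ_add]

lemma NJ_tail {n : ℕ} (M : Idx (n + 1)) :
    NJ M = NJ (Fin.tail M) + (if M 0 = 0 then 1 else 0) := by
  classical
  rw [NJ_sum, NJ_sum, Fin.sum_univ_succ]
  simp only [Fin.tail]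
  rw [add_comm]
  congr

lemma subtypeCongr_pos {α} {p q : α → Prop} [DecidablePred p] [DecidablePred q]
    (e : { x // p x } ≃ { x // q x }) (f : { x // ¬p x } ≃ { x // ¬q x })
    (a : α) (h : p a) : Equiv.subtypeCongr e f a = (e ⟨a, h⟩ : α) := by
  simp [Equiv.subtypeCongr, Equiv.sumCompl_symm_apply_of_pos h]

lemma subtypeCongr_neg {α} {p q : α → Prop} [DecidablePred p] [DecidablePred q]
    (e : { x // p x } ≃ { x // q x }) (f : { x // ¬p x } ≃ { x // ¬q x })
    (a : α) (h : ¬ p a) : Equiv.subtypeCongr e f a = (f ⟨a, h⟩ : α) := by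
  simp [Equiv.subtypeCongr, Equiv.sumCompl_symm_apply_of_neg h]

/-- The pairs-of-bijections description of permutations carrying `P` to `M`. -/
noncomputable def permMatchEquiv {n : ℕ} (M P : Idx n) :
    {σ : Equiv.Perm (Fin n) // M ∘ σ = P} ≃
      (({i : Fin n // P i = 0} ≃ {i : Fin n // M i = 0}) ×
       ({i : Fin n // ¬ P i = 0} ≃ {i : Fin n // ¬ M i = 0})) := by
  classical
  refine
  { toFun := fun σ =>
      (Equiv.subtypeEquiv σ.1 (fun i => by
         have := congrFun σ.2 i; simp only [Function.comp_apply] at this; rw [this]),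
       Equiv.subtypeEquiv σ.1 (fun i => by
         have := congrFun σ.2 i; simp only [Function.comp_apply] at this; rw [this])),
    invFun := fun e => ⟨Equiv.subtypeCongr e.1 e.2, ?_⟩,
    left_inv := ?_, right_inv := ?_ }
  · funext i
    by_cases h : P i = 0
    · simp only [Function.comp_apply, subtypeCongr_pos e.1 e.2 i h]
      rw [(e.1 ⟨i, h⟩).2, h]
    · simp only [Function.comp_apply, subtypeCongr_neg e.1 e.2 i h]
      rcases fin2_eq_zero_or_one (M ((e.2 ⟨i, h⟩ : {i : Fin n // ¬ M i = 0}) : Fin n)) with h1 | h1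
      · exact absurd h1 (e.2 ⟨i, h⟩).2
      · rcases fin2_eq_zero_or_one (P i) with h2 | h2
        · exact absurd h2 h
        · rw [h1, h2]
  · rintro ⟨σ, hσ⟩
    ext i
    by_cases h : P i = 0
    · rw [subtypeCongr_pos (p := fun i => P i = 0) (q := fun i => M i = 0) _ _ i h]
      simp [Equiv.subtypeEquiv]
    · rw [subtypeCongr_neg (p := fun i => P i = 0) (q := fun i => M i = 0) _ _ i h]
      simp [Equiv.subtypeEquiv]
  · rintro ⟨e1, e2⟩
    ext x
    · simp [Equiv.subtypeEquiv, subtypeCongr_pos e1 e2 x.1 x.2]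
    · simp [Equiv.subtypeEquiv, subtypeCongr_neg e1 e2 x.1 x.2]

lemma card_subtype_eq_NJ {n : ℕ} (M : Idx n) :
    Fintype.card {i : Fin n // M i = 0} = NJ M := by
  classical
  simp [Fintype.card_subtype, NJ]

lemma card_subtype_ne_NJ {n : ℕ} (M : Idx n) :
    Fintype.card {i : Fin n // ¬ M i = 0} = n - NJ M := by
  classical
  rw [Fintype.card_subtype_compl, card_subtype_eq_NJ]
  simp

lemma card_perm_match {n : ℕ} (M P : Idx n) :
    Fintype.card {σ : Equiv.Perm (Fin n) // M ∘ σ = P}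
      = if NJ M = NJ P then (NJ P).factorial * (n - NJ P).factorial else 0 := by
  classical
  rw [Fintype.card_congr (permMatchEquiv M P), Fintype.card_prod]
  by_cases h : NJ M = NJ P
  · have e1 : Nonempty ({i : Fin n // P i = 0} ≃ {i : Fin n // M i = 0}) := by
      rw [← Fintype.card_eq]; rw [card_subtype_eq_NJ, card_subtype_eq_NJ, h]
    have e2 : Nonempty ({i : Fin n // ¬ P i = 0} ≃ {i : Fin n // ¬ M i = 0}) := by
      rw [← Fintype.card_eq]; rw [card_subtype_ne_NJ, card_subtype_ne_NJ, h]
    rw [if_pos h, Fintype.card_equiv e1.some, Fintype.card_equiv e2.some,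
      card_subtype_eq_NJ, card_subtype_ne_NJ]
  · rw [if_neg h]
    have : IsEmpty ({i : Fin n // P i = 0} ≃ {i : Fin n // M i = 0}) := by
      constructor; intro e
      exact h (by rw [← card_subtype_eq_NJ M, ← card_subtype_eq_NJ P, Fintype.card_congr e])
    rw [Fintype.card_eq_zero, Nat.zero_mul]

lemma sum_perm_match {n : ℕ} (M P : Idx n) :
    (∑ σ : Equiv.Perm (Fin n), if M ∘ σ = P then (1:ℝ) else 0)
      = if NJ M = NJ P then (((NJ P).factorial * (n - NJ P).factorial : ℕ) : ℝ) else 0 := by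
  classical
  rw [Finset.sum_boole]
  rw [show (Finset.univ.filter fun σ : Equiv.Perm (Fin n) => M ∘ σ = P).card
      = Fintype.card {σ : Equiv.Perm (Fin n) // M ∘ σ = P} from
    (Fintype.card_subtype _).symm]
  rw [card_perm_match]
  split <;> simp

end Aux
section Aux2
open Finset

lemma card_filter_lt (n m : ℕ) (hm : m ≤ n) :
    (Finset.univ.filter fun i : Fin n => (i : ℕ) < m).card = m := by
  classical
  rcases eq_or_lt_of_le hm with rfl | h
  · rw [Finset.filter_true_of_mem (fun i _ => i.isLt)]
    simp
  · have : (Finset.univ.filter fun i : Fin n => (i:ℕ) < m) = Finset.Iio (⟨m, h⟩ : Fin n) := by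
      ext i; simp [Finset.mem_Iio, Fin.lt_def]
    rw [this, Fin.card_Iio]

lemma NJ_pattern (n m : ℕ) (hm : m ≤ n) :
    NJ (fun i : Fin n => if (i : ℕ) < m then (0 : Fin 2) else 1) = m := by
  classical
  have h : (Finset.univ.filter fun i : Fin n => (if (i:ℕ) < m then (0:Fin 2) else 1) = 0)
      = (Finset.univ.filter fun i : Fin n => (i:ℕ) < m) := by
    ext i; by_cases h : (i:ℕ) < m <;> simp [h]
  rw [NJ, h, card_filter_lt n m hm]

lemma cond_eq_pat {n m : ℕ} (P : Idx n) :
    (∀ i : Fin n, (P i = 0 ↔ (i:ℕ) < m)) ↔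
      P = (fun i : Fin n => if (i:ℕ) < m then (0:Fin 2) else 1) := by
  constructor
  · intro h; funext i; by_cases hi : (i:ℕ) < m
    · simp [hi, (h i).2 hi]
    · simp only [hi, if_false]
      rcases fin2_eq_zero_or_one (P i) with h1 | h1
      · exact absurd ((h i).1 h1) hi
      · exact h1
  · intro h i
    rw [congrFun h i]
    by_cases hi : (i:ℕ) < m <;> simp [hi]

lemma E_apply (n m : ℕ) (hm : m ≤ n) (M : Idx n) :
    E n m M = if NJ M = m
      then ((m.factorial * (n - m).factorial : ℕ) : ℝ) / (n.factorial : ℕ) else 0 := by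
  classical
  unfold E Sym
  have h1 : ∀ σ : Equiv.Perm (Fin n),
      (if ∀ i : Fin n, ((M ∘ σ) i = 0 ↔ (i:ℕ) < m) then (1:ℝ) else 0)
        = if M ∘ σ = (fun i : Fin n => if (i:ℕ) < m then (0:Fin 2) else 1) then 1 else 0 := by
    intro σ; exact if_congr (cond_eq_pat _) rfl rfl
  rw [Finset.sum_congr rfl fun σ _ => h1 σ, sum_perm_match, NJ_pattern n m hm]
  split
  · rw [div_eq_inv_mul]
  · rw [mul_zero]

lemma card_idx_count (m H : ℕ) :
    Fintype.card {J : Idx m // NJ J = H} = m.choose H := by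
  classical
  have e : {J : Idx m // NJ J = H} ≃ {s : Finset (Fin m) // s.card = H} :=
  { toFun := fun J => ⟨Finset.univ.filter fun j => J.1 j = 0, J.2⟩,
    invFun := fun s => ⟨fun j => if j ∈ s.1 then 0 else 1, by
      have h : (Finset.univ.filter fun j => (if j ∈ s.1 then (0:Fin 2) else 1) = 0) = s.1 := by
        ext j; by_cases h : j ∈ s.1 <;> simp [h]
      simpa [NJ, h] using s.2⟩,
    left_inv := fun J => by
      apply Subtype.ext; funext j
      by_cases h : J.1 j = 0
      · simp [h]
      · simp only [Finset.mem_filter, Finset.mem_univ, true_and, h, if_false]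
        rcases fin2_eq_zero_or_one (J.1 j) with h1 | h1
        · exact absurd h1 h
        · exact h1.symm,
    right_inv := fun s => by
      apply Subtype.ext
      ext j; by_cases h : j ∈ s.1 <;> simp [h] }
  rw [Fintype.card_congr e, Fintype.card_finset_len, Fintype.card_fin]

lemma NJ_eq_zero {n : ℕ} (M : Idx n) (h : NJ M = 0) : ∀ i, M i = 1 := by
  classical
  intro i
  have h2 : (Finset.univ.filter fun j => M j = 0) = ∅ := Finset.card_eq_zero.mp h
  have h3 : ¬ M i = 0 := by
    intro hi
    have : i ∈ (Finset.univ.filter fun j => M j = 0) := by simp [hi]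
    rw [h2] at this; exact absurd this (Finset.notMem_empty i)
  rcases fin2_eq_zero_or_one (M i) with h1 | h1
  · exact absurd h1 h3
  · exact h1

lemma card_pattern (k1 l1 H : ℕ) :
    Fintype.card {Q : Idx (k1 + l1) //
        NJ (fun i => Q (Fin.castAdd l1 i)) = 0 ∧ NJ (fun j => Q (Fin.natAdd k1 j)) = H}
      = l1.choose H := by
  classical
  have e : {Q : Idx (k1 + l1) //
        NJ (fun i => Q (Fin.castAdd l1 i)) = 0 ∧ NJ (fun j => Q (Fin.natAdd k1 j)) = H}
      ≃ {J : Idx l1 // NJ J = H} :=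
  { toFun := fun Q => ⟨fun j => Q.1 (Fin.natAdd k1 j), Q.2.2⟩,
    invFun := fun J => ⟨Fin.append (fun _ => 1) J.1, by
      constructor
      · have h : (fun i => Fin.append (fun _ => (1:Fin 2)) J.1 (Fin.castAdd l1 i))
            = (fun _ : Fin k1 => (1 : Fin 2)) := by
          funext i; exact Fin.append_left _ _ i
        rw [h]; simp [NJ]
      · have h : (fun j => Fin.append (fun _ => (1:Fin 2)) J.1 (Fin.natAdd k1 j)) = J.1 := by
          funext j; exact Fin.append_right _ _ j
        rw [h]; exact J.2⟩,
    left_inv := fun Q => by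
      apply Subtype.ext; funext x
      refine Fin.addCases (fun i => ?_) (fun j => ?_) x
      · show Fin.append (fun _ => (1:Fin 2)) (fun j => Q.1 (Fin.natAdd k1 j)) (Fin.castAdd l1 i)
            = Q.1 (Fin.castAdd l1 i)
        rw [Fin.append_left]
        exact (NJ_eq_zero _ Q.2.1 i).symm
      · show Fin.append (fun _ => (1:Fin 2)) (fun j => Q.1 (Fin.natAdd k1 j)) (Fin.natAdd k1 j)
            = Q.1 (Fin.natAdd k1 j)
        rw [Fin.append_right],
    right_inv := fun J => by
      apply Subtype.ext; funext j
      show Fin.append (fun _ => (1:Fin 2)) J.1 (Fin.natAdd k1 j) = J.1 j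
      rw [Fin.append_right] }
  rw [Fintype.card_congr e, card_idx_count]

lemma toFull_opA_apply (k l H : ℕ) (hHl : H ≤ l + 1)
    (fH0 : Tens (k+1) (l+1))
    (hf : ∀ I J, fH0 I J = E (k + 1) 0 I * E (l + 1) (l + 1 - H) J)
    (M : Idx ((k+1) + (l+1))) :
    toFull (opA fH0) M
      = (-1:ℝ)^(l+1-H) * (((H.factorial * (l+1-H).factorial : ℕ) : ℝ) / (((l+1).factorial : ℕ) : ℝ))
        * (if NJ (fun i => M (Fin.castAdd (l+1) i)) = 0
              ∧ NJ (fun j => M (Fin.natAdd (k+1) j)) = H then 1 else 0) := by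
  classical
  show opA fH0 _ _ = _
  set I := fun i => M (Fin.castAdd (l+1) i) with hI
  set J := fun j => M (Fin.natAdd (k+1) j) with hJdef
  rw [opA, hf, E_apply _ _ (Nat.zero_le _), E_apply _ _ (by omega : l+1-H ≤ l+1), NJ_dswap]
  have hJ := NJ_le J
  by_cases h2 : NJ J = H
  · by_cases h1 : NJ I = 0
    · rw [if_pos h1, if_pos (by omega : l+1 - NJ J = l+1-H), if_pos ⟨h1, h2⟩,
        Nat.sub_sub_self hHl, h2]
      have hk : ((k+1).factorial : ℝ) ≠ 0 := by positivity
      have hl : ((l+1).factorial : ℝ) ≠ 0 := by positivity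
      field_simp
      push_cast
      ring
    · have hind : (if NJ I = 0 ∧ NJ J = H then (1:ℝ) else 0) = 0 := if_neg (by tauto)
      rw [if_neg h1, hind]
      ring
  · have hind : (if NJ I = 0 ∧ NJ J = H then (1:ℝ) else 0) = 0 := if_neg (by tauto)
    rw [if_neg (by omega : ¬(l+1 - NJ J = l+1-H)), hind]
    ring

end Aux2
section Aux3
open Finset

lemma Sym_toFull (k l H : ℕ) (hHk : H ≤ k + 1) (hHl : H ≤ l + 1)
    (fH0 : Tens (k+1) (l+1))
    (hf : ∀ I J, fH0 I J = E (k + 1) 0 I * E (l + 1) (l + 1 - H) J)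
    (M : Idx ((k+1) + (l+1))) :
    Sym (toFull (opA fH0)) M
      = (-1:ℝ)^(l+1-H) * (if NJ M = H
          then ((H.factorial * ((k+1)+(l+1)-H).factorial : ℕ) : ℝ) / ((((k+1)+(l+1)).factorial : ℕ) : ℝ)
          else 0) := by
  classical
  have step1 : Sym (toFull (opA fH0)) M
      = ((((k+1)+(l+1)).factorial : ℝ))⁻¹ * ∑ σ : Equiv.Perm (Fin ((k+1)+(l+1))),
          (-1:ℝ)^(l+1-H) * (((H.factorial * (l+1-H).factorial : ℕ) : ℝ) / (((l+1).factorial : ℕ) : ℝ)) *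
          (if NJ (fun i => (M ∘ σ) (Fin.castAdd (l+1) i)) = 0
              ∧ NJ (fun j => (M ∘ σ) (Fin.natAdd (k+1) j)) = H then 1 else 0) := by
    unfold Sym
    congr 1
    refine Finset.sum_congr rfl fun σ _ => ?_
    exact toFull_opA_apply k l H hHl fH0 hf (M ∘ σ)
  rw [step1, ← Finset.mul_sum]
  have step2 : ∀ σ : Equiv.Perm (Fin ((k+1)+(l+1))),
      (if NJ (fun i => (M ∘ σ) (Fin.castAdd (l+1) i)) = 0
          ∧ NJ (fun j => (M ∘ σ) (Fin.natAdd (k+1) j)) = H then (1:ℝ) else 0)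
        = ∑ Q : Idx ((k+1)+(l+1)), (if NJ (fun i => Q (Fin.castAdd (l+1) i)) = 0
              ∧ NJ (fun j => Q (Fin.natAdd (k+1) j)) = H then (1:ℝ) else 0)
            * (if M ∘ σ = Q then 1 else 0) := by
    intro σ
    rw [Finset.sum_eq_single (M ∘ σ)]
    · simp
    · intro Q _ hQ
      have hz : (if M ∘ σ = Q then (1:ℝ) else 0) = 0 := if_neg (fun h => hQ h.symm)
      rw [hz, mul_zero]
    · intro h; exact absurd (Finset.mem_univ _) h
  rw [Finset.sum_congr rfl fun σ _ => step2 σ, Finset.sum_comm]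
  have step3 : ∀ Q : Idx ((k+1)+(l+1)),
      (∑ σ : Equiv.Perm (Fin ((k+1)+(l+1))), (if NJ (fun i => Q (Fin.castAdd (l+1) i)) = 0
              ∧ NJ (fun j => Q (Fin.natAdd (k+1) j)) = H then (1:ℝ) else 0)
            * (if M ∘ σ = Q then 1 else 0))
        = (if NJ (fun i => Q (Fin.castAdd (l+1) i)) = 0
              ∧ NJ (fun j => Q (Fin.natAdd (k+1) j)) = H then (1:ℝ) else 0)
            * (if NJ M = H then ((H.factorial * ((k+1)+(l+1) - H).factorial : ℕ) : ℝ) else 0) := by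
    intro Q
    rw [← Finset.mul_sum, sum_perm_match M Q]
    by_cases hQ : NJ (fun i => Q (Fin.castAdd (l+1) i)) = 0
        ∧ NJ (fun j => Q (Fin.natAdd (k+1) j)) = H
    · have hNQ : NJ Q = H := by rw [NJ_parts Q, hQ.1, hQ.2, Nat.zero_add]
      rw [hNQ]
    · rw [if_neg hQ, zero_mul, zero_mul]
  rw [Finset.sum_congr rfl fun Q _ => step3 Q, ← Finset.sum_mul]
  have step4 : (∑ Q : Idx ((k+1)+(l+1)), if NJ (fun i => Q (Fin.castAdd (l+1) i)) = 0
              ∧ NJ (fun j => Q (Fin.natAdd (k+1) j)) = H then (1:ℝ) else 0)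
      = ((l+1).choose H : ℝ) := by
    rw [Finset.sum_boole]
    have := card_pattern (k+1) (l+1) H
    rw [Fintype.card_subtype] at this
    rw [this]
  rw [step4]
  -- now pure arithmetic
  have hch : ((l+1).choose H * (H.factorial * (l+1-H).factorial) : ℕ) = (l+1).factorial := by
    rw [← Nat.choose_mul_factorial_mul_factorial hHl, Nat.mul_assoc]
  by_cases hM : NJ M = H
  · rw [if_pos hM, if_pos hM]
    have h1 : ((l+1).factorial : ℝ) ≠ 0 := by positivity
    have h2 : ((((k+1)+(l+1))).factorial : ℝ) ≠ 0 := by positivity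
    field_simp
    push_cast [← hch]
    ring
  · rw [if_neg hM, if_neg hM]
    ring

end Aux3
section Aux4
open Finset

lemma sum_fin2 {m : ℕ} (M : Idx m) (h : Fin 2 → ℝ) :
    ∑ p : Fin m, h (M p) = (NJ M : ℝ) * h 0 + ((m - NJ M : ℕ) : ℝ) * h 1 := by
  classical
  rw [← Finset.sum_filter_add_sum_filter_not Finset.univ (fun p => M p = 0)]
  have h1 : ∀ p ∈ Finset.univ.filter (fun p => M p = 0), h (M p) = h 0 := by
    intro p hp; rw [(Finset.mem_filter.mp hp).2]
  have h2 : ∀ p ∈ Finset.univ.filter (fun p => ¬ M p = 0), h (M p) = h 1 := by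
    intro p hp
    rcases fin2_eq_zero_or_one (M p) with h3 | h3
    · exact absurd h3 (Finset.mem_filter.mp hp).2
    · rw [h3]
  rw [Finset.sum_congr rfl h1, Finset.sum_congr rfl h2, Finset.sum_const, Finset.sum_const]
  have hcard : (Finset.univ.filter fun p => ¬ M p = 0).card = m - NJ M := by
    have hh := Finset.card_filter_add_card_filter_not
      (s := (Finset.univ : Finset (Fin m))) (p := fun p => M p = 0)
    simp only [Finset.card_univ, Fintype.card_fin] at hh
    have h3 : NJ M = (Finset.univ.filter fun p => M p = 0).card := rfl
    omega
  rw [hcard]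
  show (NJ M) • h 0 + (m - NJ M) • h 1 = _
  rw [nsmul_eq_mul, nsmul_eq_mul]

lemma sum_perm_head {m : ℕ} (G : Fin (m+1) → ℝ) :
    ∑ σ : Equiv.Perm (Fin (m+1)), G (σ 0) = (m.factorial : ℝ) * ∑ p : Fin (m+1), G p := by
  classical
  rw [← Equiv.sum_comp (Equiv.Perm.decomposeFin).symm (fun σ => G (σ 0))]
  rw [Fintype.sum_prod_type]
  have h1 : ∀ (p : Fin (m+1)) (τ : Equiv.Perm (Fin m)),
      G ((Equiv.Perm.decomposeFin.symm (p, τ)) 0) = G p := by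
    intro p τ; rw [Equiv.Perm.decomposeFin_symm_apply_zero]
  calc (∑ p : Fin (m+1), ∑ τ : Equiv.Perm (Fin m), G ((Equiv.Perm.decomposeFin.symm (p, τ)) 0))
      = ∑ p : Fin (m+1), ∑ _τ : Equiv.Perm (Fin m), G p := by
        refine Finset.sum_congr rfl fun p _ => Finset.sum_congr rfl fun τ _ => h1 p τ
    _ = ∑ p : Fin (m+1), (m.factorial : ℝ) * G p := by
        refine Finset.sum_congr rfl fun p _ => ?_
        rw [Finset.sum_const, Finset.card_univ, Fintype.card_perm, Fintype.card_fin,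
          nsmul_eq_mul]
    _ = (m.factorial : ℝ) * ∑ p : Fin (m+1), G p := by rw [← Finset.mul_sum]

lemma NJ_tail_eq {n : ℕ} (M : Idx (n + 1)) :
    NJ (Fin.tail M) = NJ M - (if M 0 = 0 then 1 else 0) := by
  have := NJ_tail M
  omega

lemma lam_count (k l : ℕ) (ψ : ℕ → ℕ → ℝ) (I : Idx (k+1)) (J : Idx (l+1)) :
    lam (fun (I' : Idx k) (J' : Idx l) => ψ (NJ I') (NJ J')) I J
      = ((((k+1)*(l+1) : ℕ) : ℝ))⁻¹ *
        ((NJ I * NJ J : ℕ) * ψ (NJ I - 1) (NJ J - 1)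
          + (((k+1) - NJ I) * ((l+1) - NJ J) : ℕ) * ψ (NJ I) (NJ J)) := by
  classical
  unfold lam symK symL
  have inner : ∀ (X : Idx (k+1)),
      (∑ τ : Equiv.Perm (Fin (l+1)),
        (if X 0 = (J ∘ τ) 0 then (1:ℝ) else 0) * ψ (NJ (Fin.tail X)) (NJ (Fin.tail (J ∘ τ))))
      = (l.factorial : ℝ) * ∑ q : Fin (l+1),
          (if X 0 = J q then (1:ℝ) else 0) * ψ (NJ (Fin.tail X)) (NJ J - (if J q = 0 then 1 else 0)) := by
    intro X
    have h1 : ∀ τ : Equiv.Perm (Fin (l+1)),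
        (if X 0 = (J ∘ τ) 0 then (1:ℝ) else 0) * ψ (NJ (Fin.tail X)) (NJ (Fin.tail (J ∘ τ)))
          = (fun q => (if X 0 = J q then (1:ℝ) else 0)
              * ψ (NJ (Fin.tail X)) (NJ J - (if J q = 0 then 1 else 0))) (τ 0) := by
      intro τ
      simp only [Function.comp_apply]
      rw [NJ_tail_eq (J ∘ τ), NJ_comp_perm J τ]
      rfl
    rw [Finset.sum_congr rfl fun τ _ => h1 τ]
    exact sum_perm_head (fun q => (if X 0 = J q then (1:ℝ) else 0)
      * ψ (NJ (Fin.tail X)) (NJ J - if J q = 0 then 1 else 0))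
  have step1 : ∀ σ : Equiv.Perm (Fin (k+1)),
      ((((l+1).factorial : ℝ))⁻¹ * ∑ τ : Equiv.Perm (Fin (l+1)),
        (if (I ∘ σ) 0 = (J ∘ τ) 0 then (1:ℝ) else 0)
          * ψ (NJ (Fin.tail (I ∘ σ))) (NJ (Fin.tail (J ∘ τ))))
      = (((l+1).factorial : ℝ))⁻¹ * ((l.factorial : ℝ) * ∑ q : Fin (l+1),
          (if I (σ 0) = J q then (1:ℝ) else 0) *
            ψ (NJ I - (if I (σ 0) = 0 then 1 else 0)) (NJ J - (if J q = 0 then 1 else 0))) := by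
    intro σ
    rw [inner (I ∘ σ), NJ_tail_eq (I ∘ σ), NJ_comp_perm I σ]
    rfl
  have main : (((k+1).factorial : ℝ))⁻¹ * ∑ σ : Equiv.Perm (Fin (k+1)),
      ((((l+1).factorial : ℝ))⁻¹ * ∑ τ : Equiv.Perm (Fin (l+1)),
        (if (I ∘ σ) 0 = (J ∘ τ) 0 then (1:ℝ) else 0)
          * ψ (NJ (Fin.tail (I ∘ σ))) (NJ (Fin.tail (J ∘ τ))))
      = ((((k+1)*(l+1) : ℕ) : ℝ))⁻¹ *
        ((NJ I * NJ J : ℕ) * ψ (NJ I - 1) (NJ J - 1)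
          + (((k+1) - NJ I) * ((l+1) - NJ J) : ℕ) * ψ (NJ I) (NJ J)) := by
    rw [Finset.sum_congr rfl fun σ _ => step1 σ]
    rw [sum_perm_head (fun p => (((l+1).factorial : ℝ))⁻¹ * ((l.factorial : ℝ) * ∑ q : Fin (l+1),
          (if I p = J q then (1:ℝ) else 0) *
            ψ (NJ I - (if I p = 0 then 1 else 0)) (NJ J - (if J q = 0 then 1 else 0))))]
    have hq : ∀ p : Fin (k+1), (∑ q : Fin (l+1),
        (if I p = J q then (1:ℝ) else 0)
          * ψ (NJ I - (if I p = 0 then 1 else 0)) (NJ J - (if J q = 0 then 1 else 0)))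
        = (NJ J : ℝ) * ((if I p = (0:Fin 2) then (1:ℝ) else 0)
              * ψ (NJ I - (if I p = 0 then 1 else 0)) (NJ J - 1))
          + (((l+1) - NJ J : ℕ) : ℝ) * ((if I p = (1:Fin 2) then (1:ℝ) else 0)
              * ψ (NJ I - (if I p = 0 then 1 else 0)) (NJ J)) := by
      intro p
      have h := sum_fin2 J (fun y => (if I p = y then (1:ℝ) else 0)
        * ψ (NJ I - (if I p = 0 then 1 else 0)) (NJ J - (if y = 0 then 1 else 0)))
      rw [h]
      norm_num
    rw [Finset.sum_congr rfl fun p _ => by rw [hq p]]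
    have hK := sum_fin2 I (fun x =>
        (((l+1).factorial : ℝ))⁻¹ * ((l.factorial : ℝ) *
          ((NJ J : ℝ) * ((if x = (0:Fin 2) then (1:ℝ) else 0)
              * ψ (NJ I - (if x = 0 then 1 else 0)) (NJ J - 1))
          + (((l+1) - NJ J : ℕ) : ℝ) * ((if x = (1:Fin 2) then (1:ℝ) else 0)
              * ψ (NJ I - (if x = 0 then 1 else 0)) (NJ J)))))
    rw [hK]
    have h1 : ((1:Fin 2) = 0) = False := by simp
    have h0 : ((0:Fin 2) = 0) = True := by simp
    have h01 : ((0:Fin 2) = 1) = False := by simp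
    have h11 : ((1:Fin 2) = 1) = True := by simp
    simp only [h1, h0, h01, h11, if_true, if_false, Nat.sub_zero]
    have hkf : ((k+1).factorial : ℝ) = (k+1) * (k.factorial : ℝ) := by
      rw [Nat.factorial_succ]; push_cast; ring
    have hlf : ((l+1).factorial : ℝ) = (l+1) * (l.factorial : ℝ) := by
      rw [Nat.factorial_succ]; push_cast; ring
    have hkne : (k.factorial : ℝ) ≠ 0 := by positivity
    have hlne : (l.factorial : ℝ) ≠ 0 := by positivity
    rw [hkf, hlf]
    push_cast
    field_simp
    ring
  exact main

end Aux4
section Aux5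
open Finset

noncomputable def mcoef (k1 l1 H a : ℕ) : ℝ :=
  ((k1.choose a * H.descFactorial a * l1.descFactorial (H - a) : ℕ) : ℝ)

noncomputable def Scoef (k1 l1 H a : ℕ) : ℝ := ∑ j ∈ Finset.range (a+1), mcoef k1 l1 H j

noncomputable def c2R (k1 l1 H : ℕ) : ℝ :=
  ((H.factorial * (k1 + l1 - H).factorial : ℕ) : ℝ) / (((k1+l1).factorial : ℕ) : ℝ)

noncomputable def ucoef (k1 l1 H a : ℕ) : ℝ :=
  (k1 : ℝ) * (l1 : ℝ) * ((H.factorial : ℝ) - c2R k1 l1 H * Scoef k1 l1 H a)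
    / (mcoef k1 l1 H a * ((k1 - a : ℕ) : ℝ) * ((H - a : ℕ) : ℝ))

noncomputable def psiF (k l H a b : ℕ) : ℝ :=
  if b = a + (l + 1 - H) ∧ a + 1 ≤ H then (-1:ℝ)^(l+a) * ucoef (k+1) (l+1) H a else 0

lemma descFactorial_pos' {n k : ℕ} (h : k ≤ n) : 0 < n.descFactorial k := by
  rcases Nat.eq_zero_or_pos (n.descFactorial k) with h0 | h0
  · exact absurd (Nat.descFactorial_eq_zero_iff_lt.mp h0) (by omega)
  · exact h0

lemma mcoef_pos (k1 l1 H a : ℕ) (h1 : a ≤ k1) (h2 : a ≤ H) (h3 : H ≤ l1) :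
    0 < mcoef k1 l1 H a := by
  unfold mcoef
  have c1 := Nat.choose_pos h1
  have c2 := descFactorial_pos' h2
  have c3 := descFactorial_pos' (show H - a ≤ l1 by omega)
  positivity

lemma mcoef_rec (k1 l1 H a : ℕ) (ha : 1 ≤ a) (haH : a ≤ H) (hHl : H ≤ l1) :
    (a : ℝ) * ((l1 - H + a : ℕ) : ℝ) * mcoef k1 l1 H a
      = ((k1 + 1 - a : ℕ) : ℝ) * ((H + 1 - a : ℕ) : ℝ) * mcoef k1 l1 H (a - 1) := by
  obtain ⟨a', rfl⟩ : ∃ a', a = a' + 1 := ⟨a - 1, by omega⟩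
  unfold mcoef
  have h2 : H.descFactorial (a'+1) = (H - a') * H.descFactorial a' := Nat.descFactorial_succ H a'
  have h3 : l1.descFactorial (H - a') = (l1 - H + (a'+1)) * l1.descFactorial (H - (a'+1)) := by
    rw [show H - a' = (H - (a'+1)) + 1 by omega, Nat.descFactorial_succ,
      show l1 - (H - (a'+1)) = l1 - H + (a'+1) by omega]
  have h6 : k1 + 1 - (a'+1) = k1 - a' := by omega
  have h7 : H + 1 - (a'+1) = H - a' := by omega
  have h5 : a' + 1 - 1 = a' := rfl
  rw [h2, h5, h6, h7, h3]
  have h1 : k1.choose (a'+1) * (a'+1) = k1.choose a' * (k1 - a') := Nat.choose_succ_right_eq k1 a'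
  have h1' : (k1.choose (a'+1) : ℝ) * ((a'+1 : ℕ) : ℝ) = (k1.choose a' : ℝ) * ((k1 - a' : ℕ) : ℝ) := by
    exact_mod_cast congrArg (fun x : ℕ => (x : ℝ)) h1
  push_cast
  push_cast at h1'
  linear_combination (((l1 - H : ℕ) : ℝ) + (a' : ℝ) + 1) * ((H - a' : ℕ) : ℝ)
    * ((H.descFactorial a' : ℕ) : ℝ) * ((l1.descFactorial (H - (a'+1)) : ℕ) : ℝ) * h1'

lemma Scoef_top (k1 l1 H : ℕ) (hHl : H ≤ l1) :
    Scoef k1 l1 H H = (((k1+l1).choose H * H.factorial : ℕ) : ℝ) := by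
  unfold Scoef mcoef
  rw [← Nat.cast_sum]
  congr 1
  have term : ∀ j ∈ Finset.range (H+1),
      k1.choose j * H.descFactorial j * l1.descFactorial (H - j)
        = k1.choose j * l1.choose (H - j) * H.factorial := by
    intro j hj
    have hjH : j ≤ H := by
      have := Finset.mem_range.mp hj; omega
    rw [Nat.descFactorial_eq_factorial_mul_choose H j,
      Nat.descFactorial_eq_factorial_mul_choose l1 (H-j)]
    have hh := Nat.choose_mul_factorial_mul_factorial hjH
    rw [← hh]
    ring
  rw [Finset.sum_congr rfl term, ← Finset.sum_mul]
  congr 1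
  rw [Nat.add_choose_eq, Finset.Nat.sum_antidiagonal_eq_sum_range_succ_mk]

lemma c2R_Scoef_top (k1 l1 H : ℕ) (hHk : H ≤ k1) (hHl : H ≤ l1) :
    c2R k1 l1 H * Scoef k1 l1 H H = (H.factorial : ℝ) := by
  rw [Scoef_top k1 l1 H hHl]
  unfold c2R
  have hH : H ≤ k1 + l1 := by omega
  have hch := Nat.choose_mul_factorial_mul_factorial hH
  have hne : (((k1+l1).factorial : ℕ) : ℝ) ≠ 0 := by positivity
  rw [div_mul_eq_mul_div, div_eq_iff hne]
  push_cast [← hch]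
  ring

lemma cRv_descFactorial (l1 H : ℕ) (hHl : H ≤ l1) :
    (((H.factorial * (l1-H).factorial : ℕ)) : ℝ) / ((l1.factorial : ℕ) : ℝ)
      * ((l1.descFactorial H : ℕ) : ℝ) = (H.factorial : ℝ) := by
  have hd := Nat.factorial_mul_descFactorial hHl
  have hne : ((l1.factorial : ℕ) : ℝ) ≠ 0 := by positivity
  rw [div_mul_eq_mul_div, div_eq_iff hne]
  push_cast [← hd]
  ring

lemma mcoef_zero (k1 l1 H : ℕ) : mcoef k1 l1 H 0 = ((l1.descFactorial H : ℕ) : ℝ) := by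
  unfold mcoef
  simp

lemma Scoef_zero (k1 l1 H : ℕ) : Scoef k1 l1 H 0 = mcoef k1 l1 H 0 := by
  unfold Scoef
  simp

lemma Scoef_succ (k1 l1 H a : ℕ) :
    Scoef k1 l1 H (a+1) = Scoef k1 l1 H a + mcoef k1 l1 H (a+1) := by
  unfold Scoef
  rw [Finset.sum_range_succ]

lemma level_eq (k1 l1 H : ℕ) (hH1 : 1 ≤ H) (hHk : H ≤ k1) (hHl : H ≤ l1)
    (a : ℕ) (ha : a ≤ H) :
    (a:ℝ) * ((l1 - H + a : ℕ):ℝ) * ucoef k1 l1 H (a-1)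
      - ((k1 - a : ℕ):ℝ) * ((H - a : ℕ):ℝ) * ucoef k1 l1 H a
    = (k1:ℝ) * (l1:ℝ) * (c2R k1 l1 H
        - (if a = 0 then ((H.factorial * (l1-H).factorial : ℕ):ℝ) / ((l1.factorial : ℕ):ℝ) else 0)) := by
  have hk1 : (0:ℝ) < (k1:ℝ) := by exact_mod_cast (by omega : 0 < k1)
  have hl1 : (0:ℝ) < (l1:ℝ) := by exact_mod_cast (by omega : 0 < l1)
  rcases Nat.eq_zero_or_pos a with rfl | hapos
  · -- a = 0
    rw [if_pos rfl]
    have hm0 : mcoef k1 l1 H 0 = ((l1.descFactorial H : ℕ) : ℝ) := mcoef_zero k1 l1 H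
    have hD : (0:ℝ) < ((l1.descFactorial H : ℕ) : ℝ) := by
      exact_mod_cast descFactorial_pos' hHl
    have hHpos : (0:ℝ) < ((H - 0 : ℕ):ℝ) := by
      simp only [Nat.sub_zero]; exact_mod_cast hH1
    have hu : ucoef k1 l1 H 0
        = (k1:ℝ) * (l1:ℝ) * ((H.factorial : ℝ) - c2R k1 l1 H * ((l1.descFactorial H : ℕ) : ℝ))
          / (((l1.descFactorial H : ℕ) : ℝ) * (k1:ℝ) * (H:ℝ)) := by
      unfold ucoef
      rw [hm0, Scoef_zero, hm0]
      norm_num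
    rw [hu]
    have hcd := cRv_descFactorial l1 H hHl
    have hne1 : ((l1.descFactorial H : ℕ) : ℝ) ≠ 0 := ne_of_gt hD
    have hne2 : ((l1.factorial : ℕ) : ℝ) ≠ 0 := by positivity
    have hHne : (H:ℝ) ≠ 0 := by exact_mod_cast (by omega : H ≠ 0)
    have hq : ((H.factorial * (l1-H).factorial : ℕ):ℝ) / ((l1.factorial : ℕ):ℝ)
        = (H.factorial : ℝ) / ((l1.descFactorial H : ℕ) : ℝ) := by
      rw [eq_div_iff hne1]; exact hcd
    rw [hq]
    have e0 : ((0:ℕ):ℝ) = 0 := by norm_num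
    have ek : ((k1 - 0:ℕ):ℝ) = (k1:ℝ) := by norm_num
    have eH : ((H - 0:ℕ):ℝ) = (H:ℝ) := by norm_num
    rw [e0, ek, eH, zero_mul, zero_mul]
    have hk1ne : (k1:ℝ) ≠ 0 := ne_of_gt hk1
    field_simp
    ring
  · -- 1 ≤ a
    rw [if_neg (by omega)]
    have hmp := mcoef_pos k1 l1 H (a-1) (by omega) (by omega) hHl
    have hm := mcoef_pos k1 l1 H a (by omega) ha hHl
    have hrec := mcoef_rec k1 l1 H a hapos ha hHl
    -- Term1
    have hterm1 : (a:ℝ) * ((l1 - H + a : ℕ):ℝ) * ucoef k1 l1 H (a-1)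
        = (k1:ℝ) * (l1:ℝ) * ((H.factorial : ℝ) - c2R k1 l1 H * Scoef k1 l1 H (a-1))
            / mcoef k1 l1 H a := by
      unfold ucoef
      have hc1 : ((k1 - (a-1) : ℕ):ℝ) = ((k1 + 1 - a : ℕ):ℝ) := by
        congr 1; omega
      have hc2 : ((H - (a-1) : ℕ):ℝ) = ((H + 1 - a : ℕ):ℝ) := by
        congr 1; omega
      rw [hc1, hc2]
      have hp1 : (0:ℝ) < ((k1 + 1 - a : ℕ):ℝ) := by
        exact_mod_cast (by omega : 0 < k1 + 1 - a)
      have hp2 : (0:ℝ) < ((H + 1 - a : ℕ):ℝ) := by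
        exact_mod_cast (by omega : 0 < H + 1 - a)
      have expand : (a:ℝ) * ((l1 - H + a : ℕ):ℝ) *
          ((k1:ℝ) * (l1:ℝ) * ((H.factorial : ℝ) - c2R k1 l1 H * Scoef k1 l1 H (a-1))
            / (mcoef k1 l1 H (a-1) * ((k1 + 1 - a : ℕ):ℝ) * ((H + 1 - a : ℕ):ℝ)))
          = ((a:ℝ) * ((l1 - H + a : ℕ):ℝ) *
              ((k1:ℝ) * (l1:ℝ) * ((H.factorial : ℝ) - c2R k1 l1 H * Scoef k1 l1 H (a-1))))
            / (mcoef k1 l1 H (a-1) * ((k1 + 1 - a : ℕ):ℝ) * ((H + 1 - a : ℕ):ℝ)) := by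
        ring
      rw [expand, div_eq_div_iff (by positivity) (ne_of_gt hm)]
      linear_combination ((k1:ℝ) * (l1:ℝ) * ((H.factorial : ℝ) - c2R k1 l1 H * Scoef k1 l1 H (a-1))) * hrec
    -- Term2
    have hterm2 : ((k1 - a : ℕ):ℝ) * ((H - a : ℕ):ℝ) * ucoef k1 l1 H a
        = (k1:ℝ) * (l1:ℝ) * ((H.factorial : ℝ) - c2R k1 l1 H * Scoef k1 l1 H a)
            / mcoef k1 l1 H a := by
      rcases Nat.lt_or_ge a H with hlt | hge
      · unfold ucoef
        have hp1 : (0:ℝ) < ((k1 - a : ℕ):ℝ) := by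
          exact_mod_cast (by omega : 0 < k1 - a)
        have hp2 : (0:ℝ) < ((H - a : ℕ):ℝ) := by
          exact_mod_cast (by omega : 0 < H - a)
        have expand : ((k1 - a : ℕ):ℝ) * ((H - a : ℕ):ℝ) *
            ((k1:ℝ) * (l1:ℝ) * ((H.factorial : ℝ) - c2R k1 l1 H * Scoef k1 l1 H a)
              / (mcoef k1 l1 H a * ((k1 - a : ℕ):ℝ) * ((H - a : ℕ):ℝ)))
            = (((k1 - a : ℕ):ℝ) * ((H - a : ℕ):ℝ) *
                ((k1:ℝ) * (l1:ℝ) * ((H.factorial : ℝ) - c2R k1 l1 H * Scoef k1 l1 H a)))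
              / (mcoef k1 l1 H a * ((k1 - a : ℕ):ℝ) * ((H - a : ℕ):ℝ)) := by
          ring
        rw [expand, div_eq_div_iff (by positivity) (ne_of_gt hm)]
        ring
      · -- a = H
        have haH : a = H := by omega
        rw [haH]
        have hz : ((H - H : ℕ):ℝ) = 0 := by norm_num
        have hN : (H.factorial : ℝ) - c2R k1 l1 H * Scoef k1 l1 H H = 0 := by
          rw [c2R_Scoef_top k1 l1 H hHk hHl]; ring
        rw [hz, mul_zero, zero_mul, hN]
        simp
    rw [hterm1, hterm2]
    have hS : Scoef k1 l1 H a = Scoef k1 l1 H (a-1) + mcoef k1 l1 H a := by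
      obtain ⟨a', rfl⟩ : ∃ a', a = a' + 1 := ⟨a - 1, by omega⟩
      exact Scoef_succ k1 l1 H a'
    rw [hS]
    have hmne : mcoef k1 l1 H a ≠ 0 := ne_of_gt hm
    rw [div_sub_div_same, div_eq_iff hmne]
    ring

end Aux5
section Aux6
open Finset

lemma neg_one_pow_sub_real (m j : ℕ) (h : j ≤ m) :
    (-1:ℝ)^(m - j) = (-1)^m * (-1)^j := by
  have h2 : (-1:ℝ)^(m-j) * (-1)^j = (-1)^m := by
    rw [← pow_add]; congr 1; omega
  have h3 : (-1:ℝ)^j * (-1)^j = 1 := by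
    rw [← pow_add, ← two_mul, pow_mul]; norm_num
  calc (-1:ℝ)^(m-j) = (-1)^(m-j) * ((-1)^j * (-1)^j) := by rw [h3, mul_one]
    _ = (-1)^m * (-1)^j := by rw [← mul_assoc, h2]

lemma key_identity (k l H : ℕ) (hHk : H ≤ k + 1) (hHl : H ≤ l + 1)
    (a b : ℕ) (ha : a ≤ k + 1) (hb : b ≤ l + 1) :
    (-1:ℝ)^(l+1-b) * ((-1:ℝ)^(l+1-H)
        * (if a + (l+1-b) = H then c2R (k+1) (l+1) H else 0))
      = (-1:ℝ)^(l+1) * ((if a = 0 then (1:ℝ) else 0)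
            * (if b = l+1-H
                then ((H.factorial * (l+1-H).factorial : ℕ):ℝ) / (((l+1).factorial : ℕ):ℝ)
                else 0))
        + ((((k+1)*(l+1) : ℕ):ℝ))⁻¹ *
          (((a*b : ℕ):ℝ) * psiF k l H (a-1) (b-1)
            + ((((k+1) - a) * ((l+1) - b) : ℕ):ℝ) * psiF k l H a b) := by
  have hinv : ((((k+1)*(l+1) : ℕ):ℝ)) = ((k+1:ℝ))*((l+1:ℝ)) := by push_cast; ring
  by_cases hsup : a + (l+1-b) = H
  · -- on support
    by_cases ha0 : a = 0
    · subst ha0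
      have hb0 : b = l+1-H := by omega
      by_cases hH0 : H = 0
      · subst hH0
        have hbl : b = l+1 := by omega
        have e1 : c2R (k+1) (l+1) 0 = 1 := by
          unfold c2R
          rw [Nat.sub_zero, Nat.factorial_zero, Nat.one_mul, div_self (by positivity)]
        have e2 : (((Nat.factorial 0 * (l+1-0).factorial : ℕ)):ℝ) / (((l+1).factorial : ℕ):ℝ) = 1 := by
          rw [Nat.sub_zero, Nat.factorial_zero, Nat.one_mul, div_self (by positivity)]
        rw [if_pos hsup, if_pos rfl, if_pos hb0, e1, e2]
        have e3 : psiF k l 0 0 b = 0 := by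
          unfold psiF
          rw [if_neg]; rintro ⟨_, h2⟩; omega
        have e4 : ((0 * b : ℕ):ℝ) = 0 := by norm_num
        have e5 : (((k+1-0) * ((l+1)-b) : ℕ):ℝ) = 0 := by
          rw [hbl, show (l+1) - (l+1) = 0 from by omega, Nat.mul_zero]; norm_num
        rw [e3, e4, e5, show l+1-b = 0 by omega]
        simp only [Nat.sub_zero]
        ring
      · -- a = 0, H ≥ 1
        have lvl := level_eq (k+1) (l+1) H (by omega) hHk hHl 0 (by omega)
        rw [if_pos rfl] at lvl
        have hpsi : psiF k l H 0 b = (-1:ℝ)^(l+0) * ucoef (k+1) (l+1) H 0 := by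
          unfold psiF; rw [if_pos ⟨by omega, by omega⟩]
        have hco : (((k+1-0) * ((l+1)-b) : ℕ):ℝ) = ((k+1:ℝ)) * ((H:ℝ)) := by
          rw [show k+1-0 = k+1 from rfl, show (l+1)-b = H from by omega]; push_cast; ring
        have e4 : ((0 * b : ℕ):ℝ) = 0 := by norm_num
        rw [if_pos hsup, if_pos rfl, if_pos hb0, hpsi, hco, e4, hinv,
          show l+1-b = H by omega, neg_one_pow_sub_real (l+1) H hHl]
        -- simplify lvl
        have e6 : ((0:ℕ):ℝ) = 0 := by norm_num
        have e7 : ((k+1-0 : ℕ):ℝ) = (k+1:ℝ) := by norm_num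
        have e8 : ((H-0 : ℕ):ℝ) = (H:ℝ) := by norm_num
        rw [e6, e7, e8, zero_mul, zero_mul, zero_sub] at lvl
        have hsqH : (-1:ℝ)^H * (-1)^H = 1 := by
          rw [← pow_add, ← two_mul, pow_mul]; norm_num
        have hkl : ((k+1:ℝ)) * ((l+1:ℝ)) ≠ 0 := by positivity
        have hinvmul : ((k+1:ℝ)) * ((l+1:ℝ)) * (((k+1:ℝ)) * ((l+1:ℝ)))⁻¹ = 1 :=
          mul_inv_cancel₀ hkl
        have hp : (-1:ℝ)^(l+1) = (-1:ℝ)^(l+0) * (-1) := by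
          rw [← pow_succ]
        rw [hp]
        push_cast at lvl ⊢
        linear_combination ((-1:ℝ)^(l+0) * (((k+1:ℝ)) * ((l+1:ℝ)))⁻¹) * lvl
          + ((-1:ℝ)^(l+0) * (c2R (k+1) (l+1) H
              - ((H.factorial : ℝ) * ((l+1-H).factorial : ℝ)) / (((l+1).factorial : ℝ)))) * hinvmul
          + (-((-1:ℝ)^(l+0)) * c2R (k+1) (l+1) H) * hsqH
    · -- a ≥ 1
      have ha1 : 1 ≤ a := by omega
      have haH : a ≤ H := by omega
      have hH1 : 1 ≤ H := by omega
      have hb1 : 1 ≤ b := by omega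
      have hbeq : b = l+1-H+a := by omega
      have lvl := level_eq (k+1) (l+1) H hH1 hHk hHl a haH
      rw [if_neg ha0, sub_zero] at lvl
      have hpsi1 : psiF k l H (a-1) (b-1) = (-1:ℝ)^(l+(a-1)) * ucoef (k+1) (l+1) H (a-1) := by
        unfold psiF; rw [if_pos ⟨by omega, by omega⟩]
      have hpsi2 : ((((k+1) - a) * ((l+1) - b) : ℕ):ℝ) * psiF k l H a b
          = (((k+1) - a : ℕ):ℝ) * ((H - a : ℕ):ℝ)
              * ((-1:ℝ)^(l+a) * ucoef (k+1) (l+1) H a) := by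
        by_cases haH' : a + 1 ≤ H
        · unfold psiF
          rw [if_pos ⟨by omega, haH'⟩,
            show ((k+1) - a) * ((l+1) - b) = ((k+1)-a) * (H-a) by
              have : (l+1) - b = H - a := by omega
              rw [this]]
          push_cast
          ring
        · have haH2 : a = H := by omega
          unfold psiF
          rw [if_neg (by rintro ⟨_, h2⟩; omega), mul_zero,
            show ((H - a : ℕ)) = 0 by omega]
          norm_num
      have hfterm : (if a = 0 then (1:ℝ) else 0) = 0 := if_neg ha0
      rw [if_pos hsup, hfterm, zero_mul, mul_zero, hpsi1, hpsi2, hinv,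
        show l+1-b = H-a by omega, neg_one_pow_sub_real (l+1) H hHl,
        neg_one_pow_sub_real H a haH]
      have hsqH : (-1:ℝ)^H * (-1)^H = 1 := by
        rw [← pow_add, ← two_mul, pow_mul]; norm_num
      have hsqa : (-1:ℝ)^a * (-1)^a = 1 := by
        rw [← pow_add, ← two_mul, pow_mul]; norm_num
      have hpowa : (-1:ℝ)^a = (-1)^(a-1) * (-1) := by
        rw [← pow_succ]; congr 1; omega
      have hcb : ((b:ℕ):ℝ) = (((l+1) - H + a : ℕ):ℝ) := by rw [← hbeq]
      have hab : ((a * b : ℕ):ℝ) = ((a:ℕ):ℝ) * (((l+1) - H + a : ℕ):ℝ) := by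
        rw [← hcb]; push_cast; ring
      rw [hab]
      have hpow2 : (-1:ℝ)^(l+(a-1)) = (-1:ℝ)^l * (-1)^(a-1) := by rw [pow_add]
      have hpow3 : (-1:ℝ)^(l+a) = (-1:ℝ)^l * (-1)^a := by rw [pow_add]
      have hpow4 : (-1:ℝ)^(l+1) = (-1:ℝ)^l * (-1) := by rw [pow_succ]
      rw [hpow2, hpow3, hpow4, hpowa]
      have hkl : ((k+1:ℝ)) * ((l+1:ℝ)) ≠ 0 := by positivity
      have hinvmul : ((k+1:ℝ)) * ((l+1:ℝ)) * (((k+1:ℝ)) * ((l+1:ℝ)))⁻¹ = 1 :=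
        mul_inv_cancel₀ hkl
      push_cast at lvl ⊢
      linear_combination (-((-1:ℝ)^l * (-1)^(a-1)) * (((k+1:ℝ)) * ((l+1:ℝ)))⁻¹) * lvl
        + (-((-1:ℝ)^l * (-1)^(a-1)) * c2R (k+1) (l+1) H) * hinvmul
        + (((-1:ℝ)^l * (-1)^(a-1)) * c2R (k+1) (l+1) H) * hsqH
  · -- off support
    have h1 : (if a + (l+1-b) = H then c2R (k+1) (l+1) H else 0) = 0 := if_neg hsup
    have h2 : (if a = 0 then (1:ℝ) else 0)
        * (if b = l+1-H
            then ((H.factorial * (l+1-H).factorial : ℕ):ℝ) / (((l+1).factorial : ℕ):ℝ)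
            else 0) = 0 := by
      by_cases e1 : a = 0
      · by_cases e2 : b = l+1-H
        · exfalso; omega
        · rw [if_neg e2, mul_zero]
      · rw [if_neg e1, zero_mul]
    have h3 : psiF k l H a b = 0 := by
      unfold psiF; rw [if_neg]; rintro ⟨e1, e2⟩; omega
    have h4 : ((a*b : ℕ):ℝ) * psiF k l H (a-1) (b-1) = 0 := by
      rcases Nat.eq_zero_or_pos a with e | e
      · rw [e, Nat.zero_mul]; norm_num
      · rcases Nat.eq_zero_or_pos b with e' | e'
        · rw [e', Nat.mul_zero]; norm_num
        · have hp : psiF k l H (a-1) (b-1) = 0 := by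
            unfold psiF; rw [if_neg]; rintro ⟨e1, e2⟩; omega
          rw [hp, mul_zero]
    rw [h1, h2, h3, h4]
    ring

end Aux6

/-- for the basis tensor `f_{H,0} = (⊗^k dx²) ⊗ ((⊗^(ℓ-H) dx¹) ⊗_s (⊗^H dx²))`
with `0 ≤ H ≤ min{k,ℓ}`, there is a `(k-1,ℓ-1)`-tensor `w` with
`A(Sym(A f_{H,0})) = (-1)^ℓ f_{H,0} + λw`. -/
theorem A_sym_A_on_basis (k l H : ℕ) (hH : H ≤ min (k + 1) (l + 1))
    (fH0 : Tens (k + 1) (l + 1))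
    (hf : ∀ I J, fH0 I J = E (k + 1) 0 I * E (l + 1) (l + 1 - H) J) :
    ∃ w : Tens k l, ∀ I J,
      opA (fromFull (Sym (toFull (opA fH0)))) I J
        = (-1 : ℝ) ^ (l + 1) * fH0 I J + lam w I J := by
  classical
  have hHk : H ≤ k + 1 := le_trans hH (min_le_left _ _)
  have hHl : H ≤ l + 1 := le_trans hH (min_le_right _ _)
  refine ⟨fun I' J' => psiF k l H (NJ I') (NJ J'), fun I J => ?_⟩
  have h0 : opA (fromFull (Sym (toFull (opA fH0)))) I J
      = (-1:ℝ)^(l+1-NJ J) * Sym (toFull (opA fH0)) (Fin.append I (dswap ∘ J)) := rfl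
  have hL : opA (fromFull (Sym (toFull (opA fH0)))) I J
      = (-1:ℝ)^(l+1-NJ J) * ((-1:ℝ)^(l+1-H) *
          (if NJ I + (l+1-NJ J) = H then c2R (k+1) (l+1) H else 0)) := by
    rw [h0, Sym_toFull k l H hHk hHl fH0 hf, NJ_append, NJ_dswap]
    rfl
  have e1 : ((Nat.factorial 0 * (k+1-0).factorial : ℕ):ℝ) / (((k+1).factorial : ℕ):ℝ) = 1 := by
    rw [Nat.factorial_zero, Nat.one_mul, Nat.sub_zero, div_self (by positivity)]
  have hR : fH0 I J = (if NJ I = 0 then (1:ℝ) else 0) *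
      (if NJ J = l+1-H
        then ((H.factorial * (l+1-H).factorial : ℕ):ℝ) / (((l+1).factorial : ℕ):ℝ)
        else 0) := by
    rw [hf, E_apply _ _ (Nat.zero_le _), E_apply _ _ (by omega : l+1-H ≤ l+1), e1,
      Nat.sub_sub_self hHl, Nat.mul_comm ((l+1-H).factorial) (H.factorial)]
  have hlam := lam_count k l (psiF k l H) I J
  rw [hL, hR, hlam]
  exact key_identity k l H hHk hHl (NJ I) (NJ J) (NJ_le I) (NJ_le J)

end MRT
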